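/- (Non-existence for affine growth and constant fragmentation.) Let τ₀ > 0, τ₁ ≥ 0, β₀ > 0, let τ(x) = τ₀ + τ₁x and β ≡ β₀, and let κ be a fragmentation kernel satisfying (K1) and (K2). Suppose (λ,U) solves the truncated eigenproblem on (0,∞) (R = ∞) with inflow δ = 0 in integrated form, with U ≥ 0, ∫₀^∞ U = 1, xU ∈ L¹(0,∞), and τ(x)U(x) → 0 and x·τ(x)U(x) → 0 as x → ∞. Then λ = β₀ and (β₀ − τ₁)·∫₀^∞ xU(x)dx = τ₀; in particular β₀ > τ₁, so if τ₁ ≥ β₀ then no such (λ,U) with xU ∈ L¹ exists. -/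

import Mathlib

open MeasureTheory Set Filter
open scoped ENNReal NNReal

noncomputable section

/-- The kernel `κ(·,y)` is supported in `[0,y]`. -/
def KernelSupport (κ : ℝ → Measure ℝ) : Prop :=
  ∀ y : ℝ, 0 < y → κ y (Set.Icc 0 y)ᶜ = 0

/-- Measurability of `y ↦ ∫ ψ dκ(·,y)` for continuous `ψ`. -/
def KernelMeasurable (κ : ℝ → Measure ℝ) : Prop :=
  ∀ ψ : ℝ → ℝ, Continuous ψ → Measurable fun y => ∫ x, ψ x ∂(κ y)

/-- (K1): `κ(·,y)` is a probability measure. -/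
def K1 (κ : ℝ → Measure ℝ) : Prop := ∀ y : ℝ, 0 < y → IsProbabilityMeasure (κ y)

/-- (K2): `∫ x dκ(x,y) = y/2`. -/
def K2 (κ : ℝ → Measure ℝ) : Prop := ∀ y : ℝ, 0 < y → ∫ x, x ∂(κ y) = y / 2

/-- The class `P` of nonnegative measurable functions with polynomial upper and
lower control at infinity. -/
def MemP (f : ℝ → ℝ) : Prop :=
  Measurable f ∧ (∀ x : ℝ, 0 < x → 0 ≤ f x) ∧
  (∃ μ : ℝ, 0 ≤ μ ∧ ∃ M : ℝ, ∀ᶠ x in atTop, x ^ (-μ) * f x ≤ M) ∧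
  (∃ ν : ℝ, 0 ≤ ν ∧ ∃ ε : ℝ, 0 < ε ∧ ∀ᶠ x in atTop, ε ≤ x ^ ν * f x)

/-- `(lam, U)` solves the truncated eigenproblem, in integrated form with inflow
`δ`, on the interval `S` (`S = (0,R)`, or `S = (0,∞)` for `R = ∞`):
for a.e. `x ∈ S`,
`τ(x)U(x) + λ∫₀ˣU + ∫₀ˣβU = δ + 2∫_S β(y)U(y) κ([0,x],y) dy`. -/
def TruncEigen (τ β : ℝ → ℝ) (κ : ℝ → Measure ℝ) (δ : ℝ) (S : Set ℝ)
    (lam : ℝ) (U : ℝ → ℝ) : Prop :=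
  IntegrableOn U S ∧ IntegrableOn (fun y => β y * U y) S ∧
  ∀ᵐ x ∂(volume.restrict S),
    τ x * U x + lam * (∫ y in Set.Ioo 0 x, U y) + (∫ y in Set.Ioo 0 x, β y * U y)
      = δ + 2 * ∫ y in S, β y * U y * ((κ y) (Set.Icc 0 x)).toReal

/-!
Letting `x → ∞` in the integrated equation, `τU → 0`, `∫₀ˣ U → 1` and, because
`κ([0,x],y) = 1` as soon as `x ≥ y`, the fragmentation term tends to `2β₀`; hence
`λ + β₀ = 2β₀`. With `λ = β₀` the equation reduces to
`τ(x)U(x) = 2β₀ ∫_{y ≥ x} U(y) κ([0,x],y) dy`. Integrating in `x` and exchanging the order of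
integration, the inner integral `∫₀^y κ([0,x],y) dx = y - ∫ z dκ(z,y)` equals `y/2` by (K2), so
`τ₀ + τ₁ ∫xU = ∫τU = β₀ ∫xU`. As `∫xU ≥ 0` and `τ₀ > 0`, this forces `τ₁ < β₀`.
-/

open ProbabilityTheory BoundedContinuousFunction Function Topology

theorem measurable_measure_of_measurable_integral {α X : Type*} [MeasurableSpace α]
    [TopologicalSpace X] [HasOuterApproxClosed X] [MeasurableSpace X] [BorelSpace X]
    {μ : α → Measure X} [∀ a, IsProbabilityMeasure (μ a)]
    (h : ∀ f : X →ᵇ ℝ≥0, Measurable fun a => ∫ x, (f x : ℝ) ∂μ a) :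
    Measurable μ := by
  refine .measure_of_isPiSystem_of_isProbabilityMeasure
    (BorelSpace.measurable_eq.trans borel_eq_generateFrom_isClosed) isPiSystem_isClosed
    fun F hF => measurable_of_tendsto_metrizable (fun n => ?_)
      (tendsto_pi_nhds.2 fun a => HasOuterApproxClosed.tendsto_lintegral_apprSeq hF (μ a))
  have hfin : ∀ a, ∫⁻ x, (hF.apprSeq n x : ℝ≥0∞) ∂μ a ≠ ∞ :=
    fun a => ((hF.apprSeq n).lintegral_lt_top_of_nnreal (μ a)).ne
  have hreal : (fun a => ∫⁻ x, (hF.apprSeq n x : ℝ≥0∞) ∂μ a)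
      = fun a => ENNReal.ofReal (∫ x, (hF.apprSeq n x : ℝ) ∂μ a) := funext fun a => by
    rw [← toReal_lintegral_coe_eq_integral, ENNReal.ofReal_toReal (hfin a)]
  rw [hreal]
  exact (h _).ennreal_ofReal

theorem integral_Ioc_measureReal_Icc {μ : Measure ℝ} [IsProbabilityMeasure μ] {y : ℝ}
    (hy : 0 ≤ y) (hμ : μ (Icc 0 y)ᶜ = 0) :
    ∫ x in Ioc 0 y, μ.real (Icc 0 x) = y - ∫ z, z ∂μ := by
  have hsupp : ∀ᵐ z ∂μ, z ∈ Icc 0 y := mem_ae_iff.2 hμ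
  have hint : Integrable (fun z => z) μ :=
    (integrable_const y).mono' aestronglyMeasurable_id <| hsupp.mono fun z hz => by
      simpa [abs_of_nonneg hz.1] using hz.2
  have htail : ∀ t, 0 ≤ t → μ.real {z | t < z} = 1 - μ.real (Icc 0 t) := fun t ht => by
    have hIic : Iic t =ᵐ[μ] Icc 0 t :=
      hsupp.mono fun z hz => eq_iff_iff.2 ⟨fun h => ⟨hz.1, h⟩, And.right⟩
    change μ.real (Ioi t) = _
    rw [← compl_Iic, measureReal_compl measurableSet_Iic, probReal_univ, measureReal_congr hIic]
  have hmono : Monotone fun t => μ.real (Icc 0 t) := fun a b hab =>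
    measureReal_mono (Icc_subset_Icc_right hab)
  have hcdf_int : IntegrableOn (fun t => μ.real (Icc 0 t)) (Ioc 0 y) :=
    (hmono.locallyIntegrable.integrableOn_isCompact isCompact_Icc).mono_set Ioc_subset_Icc_self
  have hmean : ∫ z, z ∂μ = ∫ t in Ioc 0 y, (1 - μ.real (Icc 0 t)) := calc
    ∫ z, z ∂μ = ∫ t in Ioi 0, μ.real {z | t < z} :=
      hint.integral_eq_integral_meas_lt (hsupp.mono fun z hz => hz.1)
    _ = ∫ t in Ioc 0 y, μ.real {z | t < z} := by
      refine setIntegral_eq_of_subset_of_forall_sdiff_eq_zero measurableSet_Ioi Ioc_subset_Ioi_self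
        fun t ht => ?_
      have hyt : y < t := not_le.1 fun h => ht.2 ⟨ht.1, h⟩
      have hsub : {z | t < z} ⊆ (Icc 0 y)ᶜ := fun z (hz : t < z) hz' => (hyt.trans hz).not_ge hz'.2
      rw [measureReal_def, measure_mono_null hsub hμ, ENNReal.toReal_zero]
    _ = ∫ t in Ioc 0 y, (1 - μ.real (Icc 0 t)) :=
      setIntegral_congr_fun measurableSet_Ioc fun t ht => htail t ht.1.le
  have hone : IntegrableOn (fun _ => (1 : ℝ)) (Ioc 0 y) := integrableOn_const measure_Ioc_lt_top.ne
  rw [hmean, integral_sub hone hcdf_int, setIntegral_const,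
    Real.volume_real_Ioc_of_le hy]
  ring

theorem integrable_indicator_setOf_fst_le_snd {f : ℝ → ℝ → ℝ} {g : ℝ → ℝ}
    (hf : AEStronglyMeasurable (uncurry f)
      ((volume.restrict (Ioi 0)).prod (volume.restrict (Ioi 0))))
    (hfg : ∀ x y, 0 < y → ‖f x y‖ ≤ g y) (hg : IntegrableOn (fun y => y * g y) (Ioi 0)) :
    Integrable ({p : ℝ × ℝ | p.1 ≤ p.2}.indicator (uncurry f))
      ((volume.restrict (Ioi 0)).prod (volume.restrict (Ioi 0))) := by
  have hT : MeasurableSet {p : ℝ × ℝ | p.1 ≤ p.2} := measurableSet_le measurable_fst measurable_snd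
  have hν : ∀ y, volume.restrict (Ioi (0 : ℝ)) (Iic y) < ∞ := fun y => by
    rw [Measure.restrict_apply measurableSet_Iic, Iic_inter_Ioi]; exact measure_Ioc_lt_top
  refine (integrable_prod_iff' (hf.indicator hT)).2 ⟨?_, ?_⟩
  · filter_upwards [ae_restrict_mem measurableSet_Ioi, hf.prod_swap.prodMk_left] with y hy hmy
    change Integrable ((Iic y).indicator fun x => f x y) _
    rw [integrable_indicator_iff measurableSet_Iic]
    exact Measure.integrableOn_of_bounded (hν y).ne hmy (M := g y)
      (Eventually.of_forall fun x => hfg x y hy)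
  · refine hg.mono' (hf.indicator hT).norm.prod_swap.integral_prod_right' ?_
    filter_upwards [ae_restrict_mem measurableSet_Ioi] with y hy
    change ‖∫ x, ‖(Iic y).indicator (fun x => f x y) x‖ ∂_‖ ≤ _
    simp_rw [norm_indicator_eq_indicator_norm]
    rw [integral_indicator measurableSet_Iic, Measure.restrict_restrict measurableSet_Iic,
      Iic_inter_Ioi]
    calc _ ≤ g y * volume.real (Ioc 0 y) :=
          norm_setIntegral_le_of_norm_le_const measure_Ioc_lt_top fun x _ => by
            simpa using hfg x y hy
      _ = y * g y := by rw [Real.volume_real_Ioc_of_le (le_of_lt hy), sub_zero, mul_comm]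

theorem integral_Ioi_integral_Ici_eq_integral_Ioi_integral_Ioc {f : ℝ → ℝ → ℝ} {g : ℝ → ℝ}
    (hf : AEStronglyMeasurable (uncurry f)
      ((volume.restrict (Ioi 0)).prod (volume.restrict (Ioi 0))))
    (hfg : ∀ x y, 0 < y → ‖f x y‖ ≤ g y) (hg : IntegrableOn (fun y => y * g y) (Ioi 0)) :
    ∫ x in Ioi 0, ∫ y in Ici x, f x y = ∫ y in Ioi 0, ∫ x in Ioc 0 y, f x y := by
  set T : Set (ℝ × ℝ) := {p | p.1 ≤ p.2}
  have hleft : ∀ x, 0 < x → ∫ y in Ioi 0, T.indicator (uncurry f) (x, y) = ∫ y in Ici x, f x y :=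
    fun x hx => by
      change ∫ y in Ioi 0, (Ici x).indicator (f x) y = _
      rw [integral_indicator measurableSet_Ici, Measure.restrict_restrict measurableSet_Ici,
        inter_eq_left.2 (Ici_subset_Ioi.2 hx)]
  have hright : ∀ y, ∫ x in Ioi 0, T.indicator (uncurry f) (x, y) = ∫ x in Ioc 0 y, f x y :=
    fun y => by
      change ∫ x in Ioi 0, (Iic y).indicator (fun x => f x y) x = _
      rw [integral_indicator measurableSet_Iic, Measure.restrict_restrict measurableSet_Iic,
        Iic_inter_Ioi]
  calc ∫ x in Ioi 0, ∫ y in Ici x, f x y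
      = ∫ x in Ioi 0, ∫ y in Ioi 0, T.indicator (uncurry f) (x, y) :=
        setIntegral_congr_fun measurableSet_Ioi fun x hx => (hleft x hx).symm
    _ = ∫ y in Ioi 0, ∫ x in Ioi 0, T.indicator (uncurry f) (x, y) :=
        integral_integral_swap (integrable_indicator_setOf_fst_le_snd hf hfg hg)
    _ = ∫ y in Ioi 0, ∫ x in Ioc 0 y, f x y := by simp_rw [hright]

theorem tendsto_setIntegral_Ioo_atTop {f : ℝ → ℝ} {a : ℝ} (hf : IntegrableOn f (Ioi a)) :
    Tendsto (fun x => ∫ y in Ioo a x, f y) atTop (𝓝 (∫ y in Ioi a, f y)) :=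
  (intervalIntegral_tendsto_integral_Ioi (b := fun x => x) a hf tendsto_id).congr' <|
    (eventually_ge_atTop a).mono fun x hx => by
      rw [intervalIntegral.integral_of_le hx, integral_Ioc_eq_integral_Ioo]

theorem eq_of_tendsto_atTop_of_ae_eq {f g : ℝ → ℝ} {a b c : ℝ} (hf : Tendsto f atTop (𝓝 a))
    (hg : Tendsto g atTop (𝓝 b)) (hfg : ∀ᵐ x ∂(volume.restrict (Ioi c)), f x = g x) : a = b := by
  by_contra hab
  obtain ⟨M, hM⟩ := eventually_atTop.1 ((hf.sub hg).eventually_ne (sub_ne_zero.2 hab))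
  have hnull : volume.restrict (Ioi c) (Ioi (max M c)) = 0 :=
    measure_mono_null (fun x hx hfgx => hM x (le_max_left M c |>.trans hx.le) (sub_eq_zero.2 hfgx))
      (ae_iff.1 hfg)
  rw [Measure.restrict_apply measurableSet_Ioi, inter_eq_left.2 (Ioi_subset_Ioi (le_max_right M c)),
    Real.volume_Ioi] at hnull
  exact ENNReal.top_ne_zero hnull

section FragmentationKernel

variable {κ : ℝ → Measure ℝ}

theorem exists_isMarkovKernel_eq (hK1 : K1 κ) (hκmeas : KernelMeasurable κ) :
    ∃ η : Kernel ℝ ℝ, IsMarkovKernel η ∧ ∀ y, 0 < y → η y = κ y := by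
  let η : ℝ → Measure ℝ := fun y => if 0 < y then κ y else Measure.dirac 0
  have hprob : ∀ y, IsProbabilityMeasure (η y) := fun y => by
    by_cases hy : 0 < y
    · simpa [η, hy] using hK1 y hy
    · simp only [η, hy, if_false]; infer_instance
  have hη : Measurable η := measurable_measure_of_measurable_integral fun f => by
    simp_rw [η, apply_ite (fun μ => ∫ x, (f x : ℝ) ∂μ)]
    exact Measurable.ite measurableSet_Ioi (hκmeas _ (by fun_prop)) measurable_const
  exact ⟨⟨η, hη⟩, ⟨hprob⟩, fun y hy => if_pos hy⟩

theorem kernel_real_Icc_of_le (hκsupp : KernelSupport κ) (hK1 : K1 κ) {x y : ℝ} (hy : 0 < y)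
    (hyx : y ≤ x) : (κ y).real (Icc 0 x) = 1 := by
  have := hK1 y hy
  rw [measureReal_def, (prob_compl_eq_zero_iff measurableSet_Icc).1
    (measure_mono_null (compl_subset_compl.2 (Icc_subset_Icc_right hyx)) (hκsupp y hy)),
    ENNReal.toReal_one]

theorem integral_Ioc_kernel_real_Icc (hκsupp : KernelSupport κ) (hK1 : K1 κ) (hK2 : K2 κ)
    {y : ℝ} (hy : 0 < y) : ∫ x in Ioc 0 y, (κ y).real (Icc 0 x) = y / 2 := by
  have := hK1 y hy
  rw [integral_Ioc_measureReal_Icc hy.le (hκsupp y hy), hK2 y hy]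
  ring

theorem aestronglyMeasurable_kernel_real_Icc (hK1 : K1 κ) (hκmeas : KernelMeasurable κ) (x : ℝ) :
    AEStronglyMeasurable (fun y => (κ y).real (Icc 0 x)) (volume.restrict (Ioi 0)) := by
  obtain ⟨η, -, hηκ⟩ := exists_isMarkovKernel_eq hK1 hκmeas
  have hmeas : Measurable fun y => η y (Icc 0 x) := η.measurable_coe measurableSet_Icc
  refine hmeas.ennreal_toReal.aestronglyMeasurable.congr ?_
  filter_upwards [ae_restrict_mem measurableSet_Ioi] with y hy
  rw [hηκ y hy, measureReal_def]

theorem aestronglyMeasurable_uncurry_kernel_real_Icc (hK1 : K1 κ) (hκmeas : KernelMeasurable κ)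
    (μ : Measure ℝ) [SFinite μ] :
    AEStronglyMeasurable (fun p : ℝ × ℝ => (κ p.2).real (Icc 0 p.1))
      (μ.prod (volume.restrict (Ioi 0))) := by
  obtain ⟨η, hη, hηκ⟩ := exists_isMarkovKernel_eq hK1 hκmeas
  have hmeas : Measurable fun p : ℝ × ℝ => η p.2 (Icc 0 p.1) :=
    Kernel.measurable_kernel_prodMk_left (κ := η.comap Prod.snd measurable_snd)
      (t := {q : (ℝ × ℝ) × ℝ | 0 ≤ q.2 ∧ q.2 ≤ q.1.1})
      ((measurableSet_le measurable_const measurable_snd).inter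
        (measurableSet_le measurable_snd (measurable_fst.comp measurable_fst)))
  refine hmeas.ennreal_toReal.aestronglyMeasurable.congr ?_
  filter_upwards [Measure.quasiMeasurePreserving_snd.ae (ae_restrict_mem measurableSet_Ioi)]
    with p hp
  rw [hηκ p.2 hp, measureReal_def]

theorem norm_mul_kernel_real_le (hK1 : K1 κ) {y : ℝ} (hy : 0 < y) (a : ℝ) (s : Set ℝ) :
    ‖a * (κ y).real s‖ ≤ ‖a‖ := by
  have := hK1 y hy
  rw [norm_mul, Real.norm_of_nonneg measureReal_nonneg]
  exact mul_le_of_le_one_right (norm_nonneg a) measureReal_le_one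

theorem integrableOn_mul_kernel_real_Icc (hK1 : K1 κ) (hκmeas : KernelMeasurable κ) {f : ℝ → ℝ}
    (hf : IntegrableOn f (Ioi 0)) (x : ℝ) :
    IntegrableOn (fun y => f y * (κ y).real (Icc 0 x)) (Ioi 0) :=
  hf.norm.mono' (hf.aestronglyMeasurable.mul (aestronglyMeasurable_kernel_real_Icc hK1 hκmeas x)) <|
    (ae_restrict_mem measurableSet_Ioi).mono fun _ hy => norm_mul_kernel_real_le hK1 hy _ _

theorem tendsto_integral_mul_kernel_real_Icc (hκsupp : KernelSupport κ) (hK1 : K1 κ)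
    (hκmeas : KernelMeasurable κ) {f : ℝ → ℝ} (hf : IntegrableOn f (Ioi 0)) :
    Tendsto (fun x => ∫ y in Ioi 0, f y * (κ y).real (Icc 0 x)) atTop (𝓝 (∫ y in Ioi 0, f y)) := by
  refine tendsto_integral_filter_of_dominated_convergence (fun y => ‖f y‖)
    (.of_forall fun x =>
      hf.aestronglyMeasurable.mul (aestronglyMeasurable_kernel_real_Icc hK1 hκmeas x))
    (.of_forall fun x => (ae_restrict_mem measurableSet_Ioi).mono fun y hy =>
      norm_mul_kernel_real_le hK1 hy _ _) hf.norm ?_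
  filter_upwards [ae_restrict_mem measurableSet_Ioi] with y hy
  refine tendsto_const_nhds.congr' ((eventually_ge_atTop y).mono fun x hx => ?_)
  dsimp only
  rw [kernel_real_Icc_of_le hκsupp hK1 hy hx, mul_one]

theorem integral_mul_kernel_real_Icc_eq_add (hκsupp : KernelSupport κ) (hK1 : K1 κ)
    (hκmeas : KernelMeasurable κ) {f : ℝ → ℝ} (hf : IntegrableOn f (Ioi 0)) {x : ℝ} (hx : 0 < x) :
    ∫ y in Ioi 0, f y * (κ y).real (Icc 0 x)
      = (∫ y in Ioo 0 x, f y) + ∫ y in Ici x, f y * (κ y).real (Icc 0 x) := by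
  have hint := integrableOn_mul_kernel_real_Icc hK1 hκmeas hf x
  rw [← Ioo_union_Ici_eq_Ioi hx] at hint ⊢
  have hdisj : Disjoint (Ioo 0 x) (Ici x) :=
    (Iio_disjoint_Ici le_rfl).mono_left Ioo_subset_Iio_self
  rw [setIntegral_union hdisj measurableSet_Ici (hint.mono_set subset_union_left)
    (hint.mono_set subset_union_right)]
  have hIoo : ∫ y in Ioo 0 x, f y * (κ y).real (Icc 0 x) = ∫ y in Ioo 0 x, f y :=
    setIntegral_congr_fun measurableSet_Ioo fun y hy => by
      rw [kernel_real_Icc_of_le hκsupp hK1 hy.1 hy.2.le, mul_one]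
  rw [hIoo]

theorem integral_Ioi_integral_Ici_mul_kernel_real_Icc (hκsupp : KernelSupport κ) (hK1 : K1 κ)
    (hK2 : K2 κ) (hκmeas : KernelMeasurable κ) {f : ℝ → ℝ}
    (hf : IntegrableOn (fun y => y * f y) (Ioi 0)) :
    ∫ x in Ioi 0, ∫ y in Ici x, f y * (κ y).real (Icc 0 x) = (∫ y in Ioi 0, y * f y) / 2 := by
  have hfm : AEStronglyMeasurable f (volume.restrict (Ioi 0)) :=
    (measurable_inv.aestronglyMeasurable.mul hf.aestronglyMeasurable).congr <|
      (ae_restrict_mem measurableSet_Ioi).mono fun y (hy : 0 < y) => inv_mul_cancel_left₀ hy.ne' _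
  have hg : IntegrableOn (fun y => y * ‖f y‖) (Ioi 0) :=
    hf.norm.congr <| (ae_restrict_mem measurableSet_Ioi).mono fun y (hy : 0 < y) => by
      dsimp only
      rw [norm_mul, Real.norm_of_nonneg hy.le]
  have hm : AEStronglyMeasurable (uncurry fun x y => f y * (κ y).real (Icc 0 x))
      ((volume.restrict (Ioi 0)).prod (volume.restrict (Ioi 0))) :=
    hfm.comp_snd.mul (aestronglyMeasurable_uncurry_kernel_real_Icc hK1 hκmeas _)
  rw [integral_Ioi_integral_Ici_eq_integral_Ioi_integral_Ioc hm
    (fun x y hy => norm_mul_kernel_real_le hK1 hy _ _) hg, ← integral_div]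
  refine setIntegral_congr_fun measurableSet_Ioi fun y hy => ?_
  rw [integral_const_mul, integral_Ioc_kernel_real_Icc hκsupp hK1 hK2 hy]
  ring

end FragmentationKernel

theorem nonexistence_affine_growth_constant_fragmentation_general
    (τ₀ τ₁ β₀ : ℝ) (hτ₀ : 0 < τ₀)
    (κ : ℝ → Measure ℝ)
    (hκsupp : KernelSupport κ) (hκmeas : KernelMeasurable κ)
    (hK1 : K1 κ) (hK2 : K2 κ)
    (lam : ℝ) (U : ℝ → ℝ)
    (hTE : TruncEigen (fun x => τ₀ + τ₁ * x) (fun _ => β₀) κ 0 (Set.Ioi 0) lam U)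
    (hU0 : ∀ᵐ x ∂(volume.restrict (Set.Ioi (0:ℝ))), 0 ≤ U x)
    (hUnorm : ∫ x in Set.Ioi (0:ℝ), U x = 1)
    (hxU : IntegrableOn (fun x => x * U x) (Set.Ioi 0))
    (hlim1 : Tendsto (fun x => (τ₀ + τ₁ * x) * U x) atTop (nhds 0)) :
    lam = β₀ ∧ (β₀ - τ₁) * (∫ x in Set.Ioi (0:ℝ), x * U x) = τ₀ ∧ τ₁ < β₀ := by
  obtain ⟨hU, -, heq⟩ := hTE
  have hbalance : ∀ᵐ x ∂(volume.restrict (Ioi 0)),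
      (τ₀ + τ₁ * x) * U x + (lam + β₀) * ∫ y in Ioo 0 x, U y
        = 2 * β₀ * ∫ y in Ioi 0, U y * (κ y).real (Icc 0 x) := by
    filter_upwards [heq] with x hx
    simp only [mul_assoc, integral_const_mul, ← measureReal_def] at hx
    linarith
  have hlam : lam = β₀ := by
    have := eq_of_tendsto_atTop_of_ae_eq
      (hlim1.add ((tendsto_setIntegral_Ioo_atTop hU).const_mul (lam + β₀)))
      ((tendsto_integral_mul_kernel_real_Icc hκsupp hK1 hκmeas hU).const_mul (2 * β₀)) hbalance
    rw [hUnorm] at this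
    linarith
  have htail : ∀ᵐ x ∂(volume.restrict (Ioi 0)),
      (τ₀ + τ₁ * x) * U x = 2 * β₀ * ∫ y in Ici x, U y * (κ y).real (Icc 0 x) := by
    filter_upwards [hbalance, ae_restrict_mem measurableSet_Ioi] with x hx hxpos
    rw [integral_mul_kernel_real_Icc_eq_add hκsupp hK1 hκmeas hU hxpos, hlam] at hx
    linarith
  have hmoment : ∫ x in Ioi 0, (τ₀ + τ₁ * x) * U x = β₀ * ∫ x in Ioi 0, x * U x := by
    rw [integral_congr_ae htail, integral_const_mul,
      integral_Ioi_integral_Ici_mul_kernel_real_Icc hκsupp hK1 hK2 hκmeas hxU]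
    ring
  have haffine : ∫ x in Ioi 0, (τ₀ + τ₁ * x) * U x = τ₀ + τ₁ * ∫ x in Ioi 0, x * U x := by
    simp_rw [add_mul, mul_assoc]
    rw [integral_add (hU.const_mul τ₀) (hxU.const_mul τ₁), integral_const_mul, integral_const_mul,
      hUnorm, mul_one]
  have hmoment_nonneg : 0 ≤ ∫ x in Ioi 0, x * U x := integral_nonneg_of_ae <| by
    filter_upwards [hU0, ae_restrict_mem measurableSet_Ioi] with x hx (hxpos : 0 < x)
    exact mul_nonneg hxpos.le hx
  have hkey : (β₀ - τ₁) * ∫ x in Ioi 0, x * U x = τ₀ := by linarith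
  refine ⟨hlam, hkey, lt_of_not_ge fun h => ?_⟩
  nlinarith

/-- **Non-existence for affine growth `τ(x)=τ₀+τ₁x` and constant fragmentation
`β ≡ β₀`.** A normalised nonnegative decaying solution of the eigenproblem on
`(0,∞)` in integrated form with `xU ∈ L¹` satisfies `λ = β₀` and
`(β₀-τ₁)∫xU = τ₀`; in particular `τ₁ < β₀`, so for `τ₁ ≥ β₀` no such solution
exists. -/
theorem nonexistence_affine_growth_constant_fragmentation
    (τ₀ τ₁ β₀ : ℝ) (hτ₀ : 0 < τ₀) (hτ₁ : 0 ≤ τ₁) (hβ₀ : 0 < β₀)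
    (κ : ℝ → Measure ℝ)
    (hκfin : ∀ y : ℝ, 0 < y → IsFiniteMeasure (κ y))
    (hκsupp : KernelSupport κ) (hκmeas : KernelMeasurable κ)
    (hK1 : K1 κ) (hK2 : K2 κ)
    (lam : ℝ) (U : ℝ → ℝ)
    (hTE : TruncEigen (fun x => τ₀ + τ₁ * x) (fun _ => β₀) κ 0 (Set.Ioi 0) lam U)
    (hU0 : ∀ᵐ x ∂(volume.restrict (Set.Ioi (0:ℝ))), 0 ≤ U x)
    (hUnorm : ∫ x in Set.Ioi (0:ℝ), U x = 1)
    (hxU : IntegrableOn (fun x => x * U x) (Set.Ioi 0))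
    (hlim1 : Tendsto (fun x => (τ₀ + τ₁ * x) * U x) atTop (nhds 0))
    (hlim2 : Tendsto (fun x => x * ((τ₀ + τ₁ * x) * U x)) atTop (nhds 0)) :
    lam = β₀ ∧ (β₀ - τ₁) * (∫ x in Set.Ioi (0:ℝ), x * U x) = τ₀ ∧ τ₁ < β₀ :=
  nonexistence_affine_growth_constant_fragmentation_general τ₀ τ₁ β₀ hτ₀ κ hκsupp hκmeas hK1 hK2 lam
    U hTE hU0 hUnorm hxU hlim1
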